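/- For a soft-reset IF neuron with constant input I(t) = c for all t, where 0 ≤ c ≤ V and threshold V > 0, and any initial potential v(0) ∈ [0, V], the firing rate r(T) = (1/T)∑_{t=1}^T s(t) converges to c/V as T → ∞. -/

import Mathlib

/-!
The update keeps the potential in `[0, V]`, and summing it over `t = 1, …, T` telescopes to
`V · ∑ s t = v 0 + T c - v T`. Hence `V · ∑ s t` differs from `T c` by at most `V`, so the firing rate
is within `1 / T` of `c / V`.
-/

open Filter Finset Set

section IFNeuron

variable {V c : ℝ} {v s : ℕ → ℝ}

lemma reset_step_mem_Icc (hc : 0 ≤ c ∧ c ≤ V) {x : ℝ} (hx : x ∈ Icc 0 V) :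
    x + c - (if V < x + c then 1 else 0) * V ∈ Icc 0 V := by
  obtain ⟨hx0, hxV⟩ := hx
  split_ifs with h <;> constructor <;> linarith [hc.1, hc.2]

lemma potential_mem_Icc (hc : 0 ≤ c ∧ c ≤ V)
    (hs : ∀ t, 1 ≤ t → s t = if V < v (t - 1) + c then 1 else 0)
    (hv : ∀ t, 1 ≤ t → v t = v (t - 1) + c - s t * V) (hv0 : v 0 ∈ Icc 0 V) :
    ∀ t, v t ∈ Icc 0 V
  | 0 => hv0
  | t + 1 => by
    rw [hv (t + 1) t.succ_pos, hs (t + 1) t.succ_pos, Nat.add_sub_cancel]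
    exact reset_step_mem_Icc hc (potential_mem_Icc hc hs hv hv0 t)

lemma sum_spikes_mul_eq (hv : ∀ t, 1 ≤ t → v t = v (t - 1) + c - s t * V) (T : ℕ) :
    (∑ t ∈ Icc 1 T, s t) * V = v 0 + T * c - v T := by
  induction T with
  | zero => simp
  | succ n ih =>
    rw [sum_Icc_succ_top n.succ_pos, add_mul, ih, hv (n + 1) n.succ_pos, Nat.add_sub_cancel]
    push_cast
    ring

lemma abs_rate_sub_le (hV : 0 < V) (hv : ∀ t, 1 ≤ t → v t = v (t - 1) + c - s t * V)
    (hbdd : ∀ t, v t ∈ Icc 0 V) {T : ℕ} (hT : T ≠ 0) :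
    |(1 / T : ℝ) * ∑ t ∈ Icc 1 T, s t - c / V| ≤ 1 / T := by
  have hT : (0 : ℝ) < T := by positivity
  have hsum : ∑ t ∈ Icc 1 T, s t = (v 0 + T * c - v T) / V :=
    (eq_div_iff hV.ne').2 (sum_spikes_mul_eq hv T)
  have hrate : (1 / T : ℝ) * ∑ t ∈ Icc 1 T, s t - c / V = (v 0 - v T) / V * (1 / T) := by
    rw [hsum]
    field_simp
    ring
  have hdiff : |v 0 - v T| / V ≤ 1 := by
    rw [div_le_one hV, abs_le]
    constructor <;> linarith [(hbdd 0).1, (hbdd 0).2, (hbdd T).1, (hbdd T).2]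
  rw [hrate, abs_mul, abs_div, abs_of_pos hV, abs_of_pos (by positivity : (0 : ℝ) < 1 / T)]
  exact mul_le_of_le_one_left (by positivity) hdiff

end IFNeuron

theorem stmt_12 (V : ℝ) (hV : 0 < V) (c : ℝ) (hc : 0 ≤ c ∧ c ≤ V) (v s : ℕ → ℝ)
    (hs : ∀ t, 1 ≤ t → s t = if V < v (t - 1) + c then 1 else 0)
    (hv : ∀ t, 1 ≤ t → v t = v (t - 1) + c - s t * V)
    (hv0 : 0 ≤ v 0 ∧ v 0 ≤ V) :
    Filter.Tendsto (fun T : ℕ => (1 / T : ℝ) * ∑ t ∈ Finset.Icc 1 T, s t)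
      Filter.atTop (nhds (c / V)) := by
  have hbdd := potential_mem_Icc hc hs hv hv0
  rw [tendsto_iff_norm_sub_tendsto_zero]
  refine squeeze_zero' (Eventually.of_forall fun _ => norm_nonneg _) ?_
    tendsto_one_div_atTop_nhds_zero_nat
  filter_upwards [eventually_ne_atTop 0] with T hT
  exact abs_rate_sub_le hV hv hbdd hT
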